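/- Let n ≥ 3 and let Q be a 3-dimensional linear subspace of ℝ^n containing at least 12 long roots of Φ_{B_n}. Then either Q is standard, or there exist four distinct indices i, j, l, s in {1, …, n} and signs δ_1, δ_2, δ_3 ∈ {+1, −1} such that Q is the orthogonal complement of the vector v = e_i + δ_1 e_j + δ_2 e_l + δ_3 e_s inside the 4-dimensional standard subspace U spanned by {e_i, e_j, e_l, e_s}. -/

import Mathlib

/-- The `i`-th standard basis vector of `ℝ^n` (Euclidean space). -/
noncomputable def stdBasis (n : ℕ) (i : Fin n) : EuclideanSpace ℝ (Fin n) :=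
  EuclideanSpace.single i 1

/-- Short roots of `B_n` : `± e_i`. -/
def IsShortRoot (n : ℕ) (x : EuclideanSpace ℝ (Fin n)) : Prop :=
  ∃ i : Fin n, x = stdBasis n i ∨ x = -stdBasis n i

/-- Long roots of `B_n` : `± e_i ± e_j` for `i ≠ j`. -/
def IsLongRoot (n : ℕ) (x : EuclideanSpace ℝ (Fin n)) : Prop :=
  ∃ i j : Fin n, i ≠ j ∧ ∃ ε₁ ε₂ : ℝ, (ε₁ = 1 ∨ ε₁ = -1) ∧ (ε₂ = 1 ∨ ε₂ = -1) ∧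
    x = ε₁ • stdBasis n i + ε₂ • stdBasis n j

/-- The root system `Φ_{B_n}`. -/
def PhiB (n : ℕ) : Set (EuclideanSpace ℝ (Fin n)) :=
  {x | IsShortRoot n x ∨ IsLongRoot n x}

/-!
Record each long root `±e_i ± e_j` of `Q` by its support `{i, j}`. If `Q` contains three
coordinate vectors, it is spanned by them. Otherwise two long roots of `Q` with the same support
are `±` each other unless both `e_i, e_j ∈ Q`, which happens for at most one support; so twelve
roots have at least five supports. If three supports pass through one index `a`, the normalised
roots `e_a + ε_k e_{u_k}` span `Q`, which is then the orthogonal complement of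
`e_a - ε₁ e_{u₁} - ε₂ e_{u₂} - ε₃ e_{u₃}` in `span {e_a, e_{u₁}, e_{u₂}, e_{u₃}}`. If not, a
short case analysis finds four of the supports, in some order, each containing an index outside
all later ones; the corresponding roots are linearly independent, contradicting `dim Q = 3`.
-/

open Module Submodule Finset

section LinearAlgebra

variable {K V : Type*} [DivisionRing K] [AddCommGroup V] [Module K V]

theorem linearIndependent_of_triangular {k : ℕ} (v : Fin k → V) (f : Fin k → Module.Dual K V)
    (hdiag : ∀ a, f a (v a) ≠ 0) (htri : ∀ a b, a < b → f a (v b) = 0) :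
    LinearIndependent K v := by
  induction k with
  | zero => exact linearIndependent_empty_type
  | succ k ih =>
    refine linearIndependent_finSucc.mpr ⟨ih _ (Fin.tail f) (fun a => hdiag a.succ)
      (fun a b hab => htri _ _ (Fin.succ_lt_succ_iff.mpr hab)), fun hmem => hdiag 0 ?_⟩
    have hker : span K (Set.range (Fin.tail v)) ≤ LinearMap.ker (f 0) :=
      span_le.mpr (by rintro _ ⟨b, rfl⟩; exact htri 0 b.succ b.succ_pos)
    exact hker hmem

theorem le_finrank_of_linearIndependent {d : ℕ} {Q : Submodule K V} [FiniteDimensional K Q]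
    {v : Fin d → V} (hv : LinearIndependent K v) (hvQ : ∀ k, v k ∈ Q) : d ≤ finrank K Q := by
  simpa [finrank_span_eq_card hv] using
    Submodule.finrank_mono (span_le.mpr (Set.range_subset_iff.mpr hvQ))

theorem Submodule.eq_of_linearIndependent_of_finrank_le [FiniteDimensional K V] {d : ℕ}
    {Q W : Submodule K V} (hQ : finrank K Q = d) (hW : finrank K W ≤ d) {v : Fin d → V}
    (hv : LinearIndependent K v)    (hvQ : ∀ k, v k ∈ Q) (hvW : ∀ k, v k ∈ W) : Q = W := by
  have hP : finrank K (span K (Set.range v)) = d := by simpa using finrank_span_eq_card hv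
  have hPQ : span K (Set.range v) = Q :=
    eq_of_le_of_finrank_le (span_le.mpr (Set.range_subset_iff.mpr hvQ)) (by omega)
  have hPW : span K (Set.range v) = W :=
    eq_of_le_of_finrank_le (span_le.mpr (Set.range_subset_iff.mpr hvW)) (by omega)
  rw [← hPQ, hPW]

end LinearAlgebra

section Combinatorics

variable {α : Type*}

/-- For the supports of vectors this says that their coordinate matrix has a triangular minor. -/
def IsTriangular {k : ℕ} (S : Fin k → Finset α) : Prop :=
  ∀ a, ∃ m ∈ S a, ∀ b, a < b → m ∉ S b

theorem exists_mem_notMem_of_ne_of_card_eq {S T : Finset α} (hST : S ≠ T) (hcard : #S = #T) :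
    ∃ m ∈ S, m ∉ T :=
  not_subset.mp fun h => hST (eq_of_subset_of_card_le h hcard.ge)

theorem isTriangular_four {A B C D : Finset α} (hA : ∃ m ∈ A, m ∉ B ∧ m ∉ C ∧ m ∉ D)
    (hB : ∃ m ∈ B, m ∉ C ∧ m ∉ D) (hC : ∃ m ∈ C, m ∉ D) (hD : D.Nonempty) :
    IsTriangular ![A, B, C, D] := by
  intro k
  fin_cases k
  · obtain ⟨m, hm, hmB, hmC, hmD⟩ := hA
    exact ⟨m, hm, fun l hl => by fin_cases l <;> simp_all⟩
  · obtain ⟨m, hm, hmC, hmD⟩ := hB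
    exact ⟨m, hm, fun l hl => by fin_cases l <;> first | exact absurd hl (by decide) | simp_all⟩
  · obtain ⟨m, hm, hmD⟩ := hC
    exact ⟨m, hm, fun l hl => by fin_cases l <;> first | exact absurd hl (by decide) | simp_all⟩
  · obtain ⟨m, hm⟩ := hD
    exact ⟨m, hm, fun l hl => by fin_cases l <;> exact absurd hl (by decide)⟩

variable [DecidableEq α] {F : Finset (Finset α)}

theorem one_lt_card_filter_disjoint (hcard : ∀ S ∈ F, #S = 2)
    (hdeg : ∀ a, #{S ∈ F | a ∈ S} ≤ 2) (hF : 5 ≤ #F) {S₀ : Finset α} (hS₀ : S₀ ∈ F) :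
    1 < #{T ∈ F | Disjoint S₀ T} := by
  obtain ⟨a, b, -, hS₀ab⟩ := card_eq_two.mp (hcard S₀ hS₀)
  have hsub : {T ∈ F | ¬Disjoint S₀ T} ⊆ {T ∈ F | a ∈ T} ∪ {T ∈ F | b ∈ T} := by
    intro T hT
    rw [mem_filter, hS₀ab, disjoint_insert_left, disjoint_singleton_left] at hT
    by_cases haT : a ∈ T <;> simp_all
  have hinter : 1 ≤ #({T ∈ F | a ∈ T} ∩ {T ∈ F | b ∈ T}) :=
    card_pos.mpr ⟨S₀, mem_inter.mpr ⟨mem_filter.mpr ⟨hS₀, by simp [hS₀ab]⟩,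
      mem_filter.mpr ⟨hS₀, by simp [hS₀ab]⟩⟩⟩
  have := card_union_add_card_inter {T ∈ F | a ∈ T} {T ∈ F | b ∈ T}
  have := card_le_card hsub
  have := card_filter_add_card_filter_not (s := F) (fun T => Disjoint S₀ T)
  have := hdeg a
  have := hdeg b
  omega

theorem eq_or_eq_of_card_filter_mem_le_two {x : α} (hdeg : #{S ∈ F | x ∈ S} ≤ 2)
    {u w T : Finset α} (hu : u ∈ F) (hw : w ∈ F) (huw : u ≠ w) (hxu : x ∈ u) (hxw : x ∈ w)
    (hT : T ∈ F) (hxT : x ∈ T) : T = u ∨ T = w := by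
  by_contra! h
  have h3 : #{T, u, w} ≤ #{S ∈ F | x ∈ S} := card_le_card (by
    intro S hS
    simp only [mem_insert, mem_singleton] at hS
    rcases hS with rfl | rfl | rfl <;> simp [*])
  rw [card_insert_of_notMem (by simp [h.1, h.2]), card_pair huw] at h3
  omega

theorem exists_isTriangular_four (hcard : ∀ S ∈ F, #S = 2)
    (hdeg : ∀ a, #{S ∈ F | a ∈ S} ≤ 2) (hF : 5 ≤ #F) :
    ∃ S : Fin 4 → Finset α, (∀ k, S k ∈ F) ∧ IsTriangular S := by
  have hne : ∀ {T T'}, T ∈ F → T' ∈ F → T ≠ T' → ∃ m ∈ T, m ∉ T' := fun hT hT' h =>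
    exists_mem_notMem_of_ne_of_card_eq h ((hcard _ hT).trans (hcard _ hT').symm)
  have hpos : ∀ {T}, T ∈ F → T.Nonempty := fun hT => card_pos.mp (by rw [hcard _ hT]; norm_num)
  obtain ⟨S₀, hS₀⟩ : F.Nonempty := card_pos.mp (by omega)
  obtain ⟨u, hu, w, hw, huw⟩ :=
    one_lt_card.mp (one_lt_card_filter_disjoint hcard hdeg hF hS₀)
  rw [mem_filter] at hu hw
  -- `u` and `w` avoid `S₀`. If they meet at `x`, no other member contains `x`, so every member
  -- other than `u`, `w` and `(u ∪ w).erase x` sticks out of `u ∪ w`.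
  by_cases huw' : Disjoint u w
  · obtain ⟨z, hzF, hz⟩ := exists_mem_notMem_of_card_lt_card (t := F)
      ((card_le_three (a := S₀) (b := u) (c := w)).trans_lt (by omega))
    simp only [mem_insert, mem_singleton, not_or] at hz
    refine ⟨![u, w, S₀, z], ?_, isTriangular_four ?_ ?_ ?_ (hpos hzF)⟩
    · intro k; fin_cases k; exacts [hu.1, hw.1, hS₀, hzF]
    · obtain ⟨m, hm, hmz⟩ := hne hu.1 hzF (Ne.symm hz.2.1)
      exact ⟨m, hm, disjoint_left.mp huw' hm, disjoint_right.mp hu.2 hm, hmz⟩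
    · obtain ⟨m, hm, hmz⟩ := hne hw.1 hzF (Ne.symm hz.2.2)
      exact ⟨m, hm, disjoint_right.mp hw.2 hm, hmz⟩
    · exact hne hS₀ hzF (Ne.symm hz.1)
  · obtain ⟨x, hxu, hxw⟩ := not_disjoint_iff.mp huw'
    obtain ⟨z, hzF, hz⟩ := exists_mem_notMem_of_card_lt_card (t := F)
      ((card_le_four (a := S₀) (b := u) (c := w) (d := (u ∪ w).erase x)).trans_lt (by omega))
    simp only [mem_insert, mem_singleton, not_or] at hz
    refine ⟨![S₀, z, u, w], ?_, isTriangular_four ?_ ?_ (hne hu.1 hw.1 huw) (hpos hw.1)⟩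
    · intro k; fin_cases k; exacts [hS₀, hzF, hu.1, hw.1]
    · obtain ⟨m, hm, hmz⟩ := hne hS₀ hzF (Ne.symm hz.1)
      exact ⟨m, hm, hmz, disjoint_left.mp hu.2 hm, disjoint_left.mp hw.2 hm⟩
    · have hxz : x ∉ z := fun h =>
        (eq_or_eq_of_card_filter_mem_le_two (hdeg x) hu.1 hw.1 huw hxu hxw hzF h).elim
          hz.2.1 hz.2.2.1
      have hle : #((u ∪ w).erase x) ≤ #z := by
        have := card_union_add_card_inter u w
        have : 1 ≤ #(u ∩ w) := card_pos.mpr ⟨x, mem_inter.mpr ⟨hxu, hxw⟩⟩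
        rw [card_erase_of_mem (mem_union_left _ hxu), hcard z hzF]
        rw [hcard u hu.1, hcard w hw.1] at *
        omega
      obtain ⟨m, hm, hmuw⟩ :=
        not_subset.mp fun h => hz.2.2.2 (eq_of_subset_of_card_le h hle)
      have hmx : m ≠ x := fun h => hxz (h ▸ hm)
      simp only [mem_erase, mem_union, not_and_or, not_or] at hmuw
      exact ⟨m, hm, by tauto⟩

end Combinatorics

theorem linearIndependent_of_coord_triangular {ι : Type*} {k : ℕ}
    (v : Fin k → EuclideanSpace ℝ ι) (m : Fin k → ι) (hdiag : ∀ a, v a (m a) ≠ 0)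
    (htri : ∀ a b, a < b → v b (m a) = 0) : LinearIndependent ℝ v :=
  linearIndependent_of_triangular v (fun a => (EuclideanSpace.proj (m a)).toLinearMap)
    (by simpa using hdiag) (by simpa using htri)

section Coordinates

variable {n : ℕ}

@[simp] theorem stdBasis_apply (i j : Fin n) : stdBasis n i j = if j = i then 1 else 0 := by
  simp [stdBasis]

theorem inner_stdBasis_right (x : EuclideanSpace ℝ (Fin n)) (i : Fin n) :
    inner ℝ x (stdBasis n i) = x i := by
  simp [stdBasis, EuclideanSpace.inner_single_right]

noncomputable def supp (x : EuclideanSpace ℝ (Fin n)) : Finset (Fin n) := {i | x i ≠ 0}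

@[simp] theorem mem_supp {x : EuclideanSpace ℝ (Fin n)} {i : Fin n} : i ∈ supp x ↔ x i ≠ 0 := by
  simp [supp]

theorem eq_smul_add_smul_of_supp_eq {x : EuclideanSpace ℝ (Fin n)} {i j : Fin n} (hij : i ≠ j)
    (hx : supp x = {i, j}) : x = x i • stdBasis n i + x j • stdBasis n j := by
  ext k
  by_cases hki : k = i
  · simp [hki, hij]
  by_cases hkj : k = j
  · simp [hkj, hij.symm]
  have hk : k ∉ supp x := by simp [hx, hki, hkj]
  simpa [hki, hkj] using hk

theorem IsLongRoot.exists_supp_eq {x : EuclideanSpace ℝ (Fin n)} (hx : IsLongRoot n x) :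
    ∃ i j, i ≠ j ∧ supp x = {i, j} ∧ (x i = 1 ∨ x i = -1) ∧ (x j = 1 ∨ x j = -1) := by
  obtain ⟨i, j, hij, ε₁, ε₂, hε₁, hε₂, rfl⟩ := hx
  have h₁ : ε₁ ≠ 0 := by rcases hε₁ with rfl | rfl <;> norm_num
  have h₂ : ε₂ ≠ 0 := by rcases hε₂ with rfl | rfl <;> norm_num
  refine ⟨i, j, hij, ?_, by simpa [hij] using hε₁, by simpa [hij.symm] using hε₂⟩
  ext k
  by_cases hki : k = i
  · simp [hki, hij, h₁]
  by_cases hkj : k = j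
  · simp [hkj, hij.symm, h₂]
  simp [hki, hkj]

theorem IsLongRoot.card_supp {x : EuclideanSpace ℝ (Fin n)} (hx : IsLongRoot n x) :
    (supp x).card = 2 := by
  obtain ⟨i, j, hij, hx, -⟩ := hx.exists_supp_eq
  simp [hx, hij]

theorem IsLongRoot.apply_of_mem_supp {x : EuclideanSpace ℝ (Fin n)} (hx : IsLongRoot n x)
    {k : Fin n} (hk : k ∈ supp x) : x k = 1 ∨ x k = -1 := by
  obtain ⟨i, j, -, hx, hi, hj⟩ := hx.exists_supp_eq
  rw [hx, mem_insert, mem_singleton] at hk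
  rcases hk with rfl | rfl <;> assumption

theorem le_finrank_of_isTriangular_supp {k : ℕ} {Q : Submodule ℝ (EuclideanSpace ℝ (Fin n))}
    {v : Fin k → EuclideanSpace ℝ (Fin n)} (hvQ : ∀ a, v a ∈ Q)
    (htri : IsTriangular fun a => supp (v a)) : k ≤ finrank ℝ Q := by
  choose m hm htri using htri
  refine le_finrank_of_linearIndependent (linearIndependent_of_coord_triangular v m
    (fun a => mem_supp.mp (hm a)) fun a b hab => ?_) hvQ
  simpa using htri a b hab

end Coordinates

section Subspaces

variable {n : ℕ} {Q : Submodule ℝ (EuclideanSpace ℝ (Fin n))}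

open scoped Classical in
theorem eq_span_stdBasis_of_three_le_card (hQ : finrank ℝ Q = 3)
    (h : 3 ≤ #{i | stdBasis n i ∈ Q}) : Q = span ℝ (stdBasis n '' {i | stdBasis n i ∈ Q}) := by
  obtain ⟨i, hi, j, hj, k, hk, hij, hik, hjk⟩ := two_lt_card.mp h
  simp only [mem_filter, mem_univ, true_and] at hi hj hk
  have hle : span ℝ (stdBasis n '' {i | stdBasis n i ∈ Q}) ≤ Q :=
    span_le.mpr (by rintro _ ⟨i, hi, rfl⟩; exact hi)
  refine Submodule.eq_of_linearIndependent_of_finrank_le hQ (hQ ▸ Submodule.finrank_mono hle)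
    (v := ![stdBasis n i, stdBasis n j, stdBasis n k]) ?_ ?_ ?_
  · refine linearIndependent_of_coord_triangular _ ![i, j, k] ?_ ?_
    · intro a; fin_cases a <;> simp
    · intro a b hab
      fin_cases a <;> fin_cases b <;> simp_all
  · intro a; fin_cases a <;> assumption
  · intro a; fin_cases a <;> exact subset_span ⟨_, ‹_›, rfl⟩

theorem finrank_inf_orthogonal_singleton_lt {E : Type*} [NormedAddCommGroup E]
    [InnerProductSpace ℝ E] [FiniteDimensional ℝ E] {U : Submodule ℝ E} {v : E} (hvU : v ∈ U)
    (hv : v ≠ 0) : finrank ℝ ↥(U ⊓ (span ℝ {v})ᗮ) < finrank ℝ U := by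
  refine Submodule.finrank_lt_finrank_of_lt (lt_of_le_of_ne inf_le_left fun h => hv ?_)
  have hvW : v ∈ U ⊓ (span ℝ {v})ᗮ := by rw [h]; exact hvU
  exact inner_self_eq_zero.mp (mem_orthogonal_singleton_iff_inner_right.mp hvW.2)

theorem eq_inf_orthogonal_of_star (hQ : finrank ℝ Q = 3) {a u₁ u₂ u₃ : Fin n}
    (h₁ : a ≠ u₁) (h₂ : a ≠ u₂) (h₃ : a ≠ u₃) (h₁₂ : u₁ ≠ u₂) (h₁₃ : u₁ ≠ u₃) (h₂₃ : u₂ ≠ u₃)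
    {ε₁ ε₂ ε₃ : ℝ} (hε₁ : ε₁ * ε₁ = 1) (hε₂ : ε₂ * ε₂ = 1) (hε₃ : ε₃ * ε₃ = 1)
    (hw₁ : stdBasis n a + ε₁ • stdBasis n u₁ ∈ Q) (hw₂ : stdBasis n a + ε₂ • stdBasis n u₂ ∈ Q)
    (hw₃ : stdBasis n a + ε₃ • stdBasis n u₃ ∈ Q) :
    Q = span ℝ {stdBasis n a, stdBasis n u₁, stdBasis n u₂, stdBasis n u₃} ⊓
      (span ℝ {stdBasis n a + (-ε₁) • stdBasis n u₁ + (-ε₂) • stdBasis n u₂ +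
        (-ε₃) • stdBasis n u₃})ᗮ := by
  set U := span ℝ {stdBasis n a, stdBasis n u₁, stdBasis n u₂, stdBasis n u₃}
  set v := stdBasis n a + (-ε₁) • stdBasis n u₁ + (-ε₂) • stdBasis n u₂ + (-ε₃) • stdBasis n u₃
  have hmemU : ∀ i ∈ ({a, u₁, u₂, u₃} : Set (Fin n)), stdBasis n i ∈ U := by
    rintro i (rfl | rfl | rfl | rfl) <;> exact subset_span (by simp)
  have hva : v a = 1 := by simp [v, h₁, h₂, h₃]
  have hW : finrank ℝ ↥(U ⊓ (span ℝ {v})ᗮ) ≤ 3 := by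
    have hvU : v ∈ U := by
      refine add_mem (add_mem (add_mem ?_ (smul_mem _ _ ?_)) (smul_mem _ _ ?_)) (smul_mem _ _ ?_)
        <;> exact hmemU _ (by simp)
    have hlt := finrank_inf_orthogonal_singleton_lt hvU fun h => by simp [h] at hva
    have hU : finrank ℝ U ≤ 4 := by
      have := (finrank_span_finset_le_card (R := ℝ)
        {stdBasis n a, stdBasis n u₁, stdBasis n u₂, stdBasis n u₃}).trans card_le_four
      rwa [Set.finrank, coe_insert, coe_insert, coe_insert, coe_singleton] at this
    omega
  have hmemW : ∀ u ∈ ({u₁, u₂, u₃} : Set (Fin n)), ∀ ε : ℝ, v u = -ε → ε * ε = 1 →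
      stdBasis n a + ε • stdBasis n u ∈ U ⊓ (span ℝ {v})ᗮ := by
    intro u hu ε hvu hε
    refine ⟨add_mem (hmemU a (by simp)) (smul_mem _ _ (hmemU u (by simp_all))),
      mem_orthogonal_singleton_iff_inner_right.mpr ?_⟩
    rw [inner_add_right, inner_smul_right, inner_stdBasis_right, inner_stdBasis_right, hva, hvu]
    linarith
  have hne : ∀ ε : ℝ, ε * ε = 1 → ε ≠ 0 := by rintro ε h rfl; simp at h
  refine Submodule.eq_of_linearIndependent_of_finrank_le hQ hW
    (v := ![stdBasis n a + ε₁ • stdBasis n u₁, stdBasis n a + ε₂ • stdBasis n u₂,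
      stdBasis n a + ε₃ • stdBasis n u₃])
    (linearIndependent_of_coord_triangular _ ![u₁, u₂, u₃] ?_ ?_) ?_ ?_
  · intro k
    fin_cases k <;> simp [h₁.symm, h₂.symm, h₃.symm, hne _ hε₁, hne _ hε₂, hne _ hε₃]
  · intro k l hkl
    fin_cases k <;> fin_cases l <;> simp_all [h₁.symm, h₂.symm]
  · intro k; fin_cases k <;> assumption
  · intro k
    fin_cases k
    · exact hmemW u₁ (by simp) ε₁ (by simp [v, h₁.symm, h₁₂, h₁₃]) hε₁
    · exact hmemW u₂ (by simp) ε₂ (by simp [v, h₂.symm, h₁₂.symm, h₂₃]) hε₂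
    · exact hmemW u₃ (by simp) ε₃ (by simp [v, h₃.symm, h₁₃.symm, h₂₃.symm]) hε₃

end Subspaces

section Roots

variable {n : ℕ} {Q : Submodule ℝ (EuclideanSpace ℝ (Fin n))}
  {R : Finset (EuclideanSpace ℝ (Fin n))}

theorem IsLongRoot.mul_self_apply_of_mem_supp {x : EuclideanSpace ℝ (Fin n)} (hx : IsLongRoot n x)
    {k : Fin n} (hk : k ∈ supp x) : x k * x k = 1 :=
  mul_self_eq_one_iff.mpr (hx.apply_of_mem_supp hk)

theorem IsLongRoot.exists_stdBasis_add_smul_mem {x : EuclideanSpace ℝ (Fin n)} (hx : IsLongRoot n x)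
    (hxQ : x ∈ Q) {a u : Fin n} (hau : a ≠ u) (hsupp : supp x = {a, u}) :
    ∃ ε : ℝ, ε * ε = 1 ∧ stdBasis n a + ε • stdBasis n u ∈ Q := by
  have ha := hx.mul_self_apply_of_mem_supp (by simp [hsupp] : a ∈ supp x)
  have hu := hx.mul_self_apply_of_mem_supp (by simp [hsupp] : u ∈ supp x)
  refine ⟨x a * x u, by rw [mul_mul_mul_comm, ha, hu, one_mul], ?_⟩
  have hnorm : stdBasis n a + (x a * x u) • stdBasis n u = x a • x := by
    calc stdBasis n a + (x a * x u) • stdBasis n u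
        = x a • (x a • stdBasis n a + x u • stdBasis n u) := by
          rw [smul_add, smul_smul, smul_smul, ha, one_smul]
      _ = x a • x := by rw [← eq_smul_add_smul_of_supp_eq hau hsupp]
  rw [hnorm]
  exact Q.smul_mem _ hxQ

theorem exists_stdBasis_add_smul_mem_of_mem_image (hR : ∀ x ∈ R, IsLongRoot n x ∧ x ∈ Q)
    {S : Finset (Fin n)} (hS : S ∈ R.image supp) {a : Fin n} (ha : a ∈ S) :
    ∃ u, a ≠ u ∧ S = {a, u} ∧ ∃ ε : ℝ, ε * ε = 1 ∧ stdBasis n a + ε • stdBasis n u ∈ Q := by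
  obtain ⟨x, hx, rfl⟩ := mem_image.mp hS
  obtain ⟨i, j, hij, hsupp, -⟩ := (hR x hx).1.exists_supp_eq
  obtain ⟨u, hau, hpair⟩ : ∃ u, a ≠ u ∧ supp x = {a, u} := by
    rw [hsupp, mem_insert, mem_singleton] at ha
    rcases ha with rfl | rfl
    · exact ⟨j, hij, hsupp⟩
    · exact ⟨i, hij.symm, hsupp.trans (pair_comm _ _)⟩
  exact ⟨u, hau, hpair, (hR x hx).1.exists_stdBasis_add_smul_mem (hR x hx).2 hau hpair⟩

theorem eq_inf_orthogonal_of_two_lt_card (hQ : finrank ℝ Q = 3)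
    (hR : ∀ x ∈ R, IsLongRoot n x ∧ x ∈ Q) {a : Fin n} (h : 2 < #{S ∈ R.image supp | a ∈ S}) :
    ∃ i j l s : Fin n, i ≠ j ∧ i ≠ l ∧ i ≠ s ∧ j ≠ l ∧ j ≠ s ∧ l ≠ s ∧
      ∃ δ₁ δ₂ δ₃ : ℝ, (δ₁ = 1 ∨ δ₁ = -1) ∧ (δ₂ = 1 ∨ δ₂ = -1) ∧ (δ₃ = 1 ∨ δ₃ = -1) ∧
        Q = span ℝ {stdBasis n i, stdBasis n j, stdBasis n l, stdBasis n s} ⊓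
          (span ℝ {stdBasis n i + δ₁ • stdBasis n j + δ₂ • stdBasis n l + δ₃ • stdBasis n s})ᗮ := by
  obtain ⟨S₁, hS₁, S₂, hS₂, S₃, hS₃, h₁₂, h₁₃, h₂₃⟩ := two_lt_card.mp h
  simp only [mem_filter] at hS₁ hS₂ hS₃
  obtain ⟨u₁, h₁, rfl, ε₁, hε₁, hw₁⟩ := exists_stdBasis_add_smul_mem_of_mem_image hR hS₁.1 hS₁.2
  obtain ⟨u₂, h₂, rfl, ε₂, hε₂, hw₂⟩ := exists_stdBasis_add_smul_mem_of_mem_image hR hS₂.1 hS₂.2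
  obtain ⟨u₃, h₃, rfl, ε₃, hε₃, hw₃⟩ := exists_stdBasis_add_smul_mem_of_mem_image hR hS₃.1 hS₃.2
  have hneg : ∀ ε : ℝ, ε * ε = 1 → -ε = 1 ∨ -ε = -1 := fun ε hε =>
    mul_self_eq_one_iff.mp (by rw [neg_mul_neg, hε])
  have hu₁₂ : u₁ ≠ u₂ := by rintro rfl; exact h₁₂ rfl
  have hu₁₃ : u₁ ≠ u₃ := by rintro rfl; exact h₁₃ rfl
  have hu₂₃ : u₂ ≠ u₃ := by rintro rfl; exact h₂₃ rfl
  exact ⟨a, u₁, u₂, u₃, h₁, h₂, h₃, hu₁₂, hu₁₃, hu₂₃, -ε₁, -ε₂, -ε₃, hneg _ hε₁, hneg _ hε₂,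
    hneg _ hε₃, eq_inf_orthogonal_of_star hQ h₁ h₂ h₃ hu₁₂ hu₁₃ hu₂₃ hε₁ hε₂ hε₃ hw₁ hw₂ hw₃⟩

end Roots

section Counting

variable {n : ℕ} {Q : Submodule ℝ (EuclideanSpace ℝ (Fin n))}
  {R : Finset (EuclideanSpace ℝ (Fin n))}

theorem eq_or_eq_neg_or_stdBasis_mem {i j : Fin n} {a b c d : ℝ} (hb : b * b = 1) (hd : d * d = 1)
    (hx : a • stdBasis n i + b • stdBasis n j ∈ Q) (hy : c • stdBasis n i + d • stdBasis n j ∈ Q) :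
    c • stdBasis n i + d • stdBasis n j = a • stdBasis n i + b • stdBasis n j ∨
      c • stdBasis n i + d • stdBasis n j = -(a • stdBasis n i + b • stdBasis n j) ∨
      (stdBasis n i ∈ Q ∧ stdBasis n j ∈ Q) := by
  by_cases hdet : a * d - b * c = 0
  · have hc : c = (b * d) * a := by linear_combination (-b) * hdet - c * hb
    have hd' : d = (b * d) * b := by linear_combination (-d) * hb
    have hbd : (b * d) * (b * d) = 1 := by linear_combination (d * d) * hb + hd
    rcases mul_self_eq_one_iff.mp hbd with h | h <;> rw [h] at hc hd' <;> rw [hc, hd']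
    · left; simp
    · right; left; module
  · right; right
    constructor
    · refine (Q.smul_mem_iff hdet).mp ?_
      have : (a * d - b * c) • stdBasis n i =
          d • (a • stdBasis n i + b • stdBasis n j) - b • (c • stdBasis n i + d • stdBasis n j) :=
        by module
      rw [this]; exact Q.sub_mem (Q.smul_mem _ hx) (Q.smul_mem _ hy)
    · refine (Q.smul_mem_iff hdet).mp ?_
      have : (a * d - b * c) • stdBasis n j =
          a • (c • stdBasis n i + d • stdBasis n j) - c • (a • stdBasis n i + b • stdBasis n j) :=
        by module
      rw [this]; exact Q.sub_mem (Q.smul_mem _ hy) (Q.smul_mem _ hx)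

theorem card_filter_supp_eq_le_four (hR : ∀ x ∈ R, IsLongRoot n x) {i j : Fin n} (hij : i ≠ j) :
    #{x ∈ R | supp x = {i, j}} ≤ 4 := by
  have hsub : {x ∈ R | supp x = {i, j}} ⊆ (({1, -1} : Finset ℝ) ×ˢ ({1, -1} : Finset ℝ)).image
      fun p => p.1 • stdBasis n i + p.2 • stdBasis n j := by
    intro x hx
    obtain ⟨hxR, hsx⟩ := mem_filter.mp hx
    refine mem_image.mpr ⟨(x i, x j), ?_, (eq_smul_add_smul_of_supp_eq hij hsx).symm⟩
    simpa [mem_product] using ⟨(hR x hxR).apply_of_mem_supp (by simp [hsx]),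
      (hR x hxR).apply_of_mem_supp (by simp [hsx])⟩
  calc #{x ∈ R | supp x = {i, j}} ≤ #(({1, -1} : Finset ℝ) ×ˢ ({1, -1} : Finset ℝ)) :=
        (card_le_card hsub).trans card_image_le
    _ ≤ 2 * 2 := by rw [card_product]; exact Nat.mul_le_mul card_le_two card_le_two

theorem card_filter_supp_eq_le_two (hR : ∀ x ∈ R, IsLongRoot n x ∧ x ∈ Q) {i j : Fin n}
    (hij : i ≠ j) (hstd : ¬(stdBasis n i ∈ Q ∧ stdBasis n j ∈ Q)) :
    #{x ∈ R | supp x = {i, j}} ≤ 2 := by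
  rcases eq_empty_or_nonempty {x ∈ R | supp x = {i, j}} with h | ⟨x, hx⟩
  · simp [h]
  refine (card_le_card fun y hy => ?_).trans (card_le_two (a := x) (b := -x))
  obtain ⟨hxR, hsx⟩ := mem_filter.mp hx
  obtain ⟨hyR, hsy⟩ := mem_filter.mp hy
  have hxQ := (hR x hxR).2
  have hyQ := (hR y hyR).2
  rw [eq_smul_add_smul_of_supp_eq hij hsx] at hxQ
  rw [eq_smul_add_smul_of_supp_eq hij hsy] at hyQ
  have := eq_or_eq_neg_or_stdBasis_mem ((hR x hxR).1.mul_self_apply_of_mem_supp (by simp [hsx]))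
    ((hR y hyR).1.mul_self_apply_of_mem_supp (by simp [hsy])) hxQ hyQ
  rw [← eq_smul_add_smul_of_supp_eq hij hsx, ← eq_smul_add_smul_of_supp_eq hij hsy] at this
  simp only [mem_insert, mem_singleton]
  tauto

open scoped Classical in
theorem card_le_two_mul_card_image_supp_add_two (hR : ∀ x ∈ R, IsLongRoot n x ∧ x ∈ Q)
    (hstd : #{i | stdBasis n i ∈ Q} ≤ 2) : #R ≤ 2 * #(R.image supp) + 2 := by
  set C : Finset (Fin n) := {i | stdBasis n i ∈ Q}
  have hfiber : ∀ S ∈ R.image supp, #{x ∈ R | supp x = S} ≤ if S ⊆ C then 4 else 2 := by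
    intro S hS
    obtain ⟨x, hx, rfl⟩ := mem_image.mp hS
    obtain ⟨i, j, hij, hsupp, -⟩ := (hR x hx).1.exists_supp_eq
    rw [hsupp]
    split_ifs with hsub
    · exact card_filter_supp_eq_le_four (fun y hy => (hR y hy).1) hij
    · refine card_filter_supp_eq_le_two hR hij fun ⟨hi, hj⟩ => hsub ?_
      simp [insert_subset_iff, C, hi, hj]
  have hinside : #{S ∈ R.image supp | S ⊆ C} ≤ 1 := by
    calc #{S ∈ R.image supp | S ⊆ C} ≤ #(C.powersetCard 2) := by
          refine card_le_card fun S hS => ?_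
          obtain ⟨hS, hSC⟩ := mem_filter.mp hS
          obtain ⟨x, hx, rfl⟩ := mem_image.mp hS
          exact mem_powersetCard.mpr ⟨hSC, (hR x hx).1.card_supp⟩
      _ = (#C).choose 2 := card_powersetCard _ _
      _ ≤ 1 := by interval_cases #C <;> decide
  calc #R = ∑ S ∈ R.image supp, #{x ∈ R | supp x = S} := card_eq_sum_card_image supp R
    _ ≤ ∑ S ∈ R.image supp, if S ⊆ C then 4 else 2 := sum_le_sum hfiber
    _ = 4 * #{S ∈ R.image supp | S ⊆ C} + 2 * #{S ∈ R.image supp | ¬S ⊆ C} := by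
      rw [sum_ite, sum_const, sum_const, smul_eq_mul, smul_eq_mul, mul_comm, mul_comm (#_)]
    _ ≤ 2 * #(R.image supp) + 2 := by
      have := card_filter_add_card_filter_not (s := R.image supp) (· ⊆ C)
      omega

end Counting

theorem stmt4_general (n : ℕ) (Q : Submodule ℝ (EuclideanSpace ℝ (Fin n)))
    (hdim : Module.finrank ℝ Q = 3)
    (hroots : 12 ≤ {x ∈ (Q : Set (EuclideanSpace ℝ (Fin n))) | x ∈ PhiB n ∧ IsLongRoot n x}.ncard) :
    (∃ S : Set (Fin n), Q = Submodule.span ℝ (stdBasis n '' S)) ∨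
    (∃ i j l s : Fin n, i ≠ j ∧ i ≠ l ∧ i ≠ s ∧ j ≠ l ∧ j ≠ s ∧ l ≠ s ∧
      ∃ δ₁ δ₂ δ₃ : ℝ, (δ₁ = 1 ∨ δ₁ = -1) ∧ (δ₂ = 1 ∨ δ₂ = -1) ∧ (δ₃ = 1 ∨ δ₃ = -1) ∧
        Q = Submodule.span ℝ {stdBasis n i, stdBasis n j, stdBasis n l, stdBasis n s} ⊓
          (Submodule.span ℝ
            {stdBasis n i + δ₁ • stdBasis n j + δ₂ • stdBasis n l + δ₃ • stdBasis n s})ᗮ) := by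
  classical
  have hfin : {x ∈ (Q : Set _) | x ∈ PhiB n ∧ IsLongRoot n x}.Finite :=
    Set.finite_of_ncard_ne_zero (by omega)
  set R := hfin.toFinset
  have hR : ∀ x ∈ R, IsLongRoot n x ∧ x ∈ Q := fun x hx => by
    obtain ⟨hxQ, -, hx⟩ := hfin.mem_toFinset.mp hx
    exact ⟨hx, hxQ⟩
  by_cases hstd : 3 ≤ #{i | stdBasis n i ∈ Q}
  · exact Or.inl ⟨_, eq_span_stdBasis_of_three_le_card hdim hstd⟩
  by_cases hstar : ∃ a, 2 < #{S ∈ R.image supp | a ∈ S}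
  · obtain ⟨a, ha⟩ := hstar
    exact Or.inr (eq_inf_orthogonal_of_two_lt_card hdim hR ha)
  simp only [not_exists, not_lt] at hstar
  have hcount := card_le_two_mul_card_image_supp_add_two hR (by omega)
  rw [← Set.ncard_eq_toFinset_card _ hfin] at hcount
  have hcard : ∀ S ∈ R.image supp, #S = 2 := by
    intro S hS
    obtain ⟨x, hx, rfl⟩ := mem_image.mp hS
    exact (hR x hx).1.card_supp
  obtain ⟨S, hSF, htri⟩ := exists_isTriangular_four hcard hstar (by omega)
  choose x hxR hxS using fun k => mem_image.mp (hSF k)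
  rw [← funext hxS] at htri
  have := le_finrank_of_isTriangular_supp (fun k => (hR _ (hxR k)).2) htri
  omega

/-- A 3-space in `ℝ^n` containing at least 12 long roots of `Φ_{B_n}` is either standard,
or is the orthogonal complement of a vector `e_i + δ₁ e_j + δ₂ e_l + δ₃ e_s` inside the
standard 4-space spanned by `{e_i, e_j, e_l, e_s}`. -/
theorem stmt4 (n : ℕ) (hn : 3 ≤ n) (Q : Submodule ℝ (EuclideanSpace ℝ (Fin n)))
    (hdim : Module.finrank ℝ Q = 3)
    (hroots : 12 ≤ {x ∈ (Q : Set (EuclideanSpace ℝ (Fin n))) | x ∈ PhiB n ∧ IsLongRoot n x}.ncard) :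
    (∃ S : Set (Fin n), Q = Submodule.span ℝ (stdBasis n '' S)) ∨
    (∃ i j l s : Fin n, i ≠ j ∧ i ≠ l ∧ i ≠ s ∧ j ≠ l ∧ j ≠ s ∧ l ≠ s ∧
      ∃ δ₁ δ₂ δ₃ : ℝ, (δ₁ = 1 ∨ δ₁ = -1) ∧ (δ₂ = 1 ∨ δ₂ = -1) ∧ (δ₃ = 1 ∨ δ₃ = -1) ∧
        Q = Submodule.span ℝ {stdBasis n i, stdBasis n j, stdBasis n l, stdBasis n s} ⊓
          (Submodule.span ℝ
            {stdBasis n i + δ₁ • stdBasis n j + δ₂ • stdBasis n l + δ₃ • stdBasis n s})ᗮ) :=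
  stmt4_general n Q hdim hroots
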